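/- Let G be a simple graph with maximum degree at most 3 and let φ be a proper coloring of G. Then φ is a proper coloring of the square G² (i.e., φ assigns distinct colors to any two distinct vertices at distance at most 2 in G) if and only if φ is a 2-PCF coloring of G, i.e., for every vertex v at least min{2, d_G(v)} colors appear on exactly one neighbor of v. -/

import Mathlib

/-- An `h`-PCF coloring of `G`: a proper coloring `φ` such that for every vertex `v`,
at least `min h (d_G(v))` colors appear on exactly one neighbor of `v`. -/
def SimpleGraph.IsPCFColoring {V α : Type*} (G : SimpleGraph V) (h : ℕ)
    (φ : V → α) : Prop :=
  (∀ ⦃u w : V⦄, G.Adj u w → φ u ≠ φ w) ∧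
  ∀ v : V, min h {u | G.Adj v u}.ncard ≤
    {c : α | {u | G.Adj v u ∧ φ u = c}.ncard = 1}.ncard

/-- `G` admits an `h`-PCF `k`-coloring. -/
def SimpleGraph.HasPCFColoring {V : Type*} (G : SimpleGraph V) (h k : ℕ) : Prop :=
  ∃ φ : V → Fin k, G.IsPCFColoring h φ

/-- The `S`-reduced graph `G*S`: delete `S`, and join two distinct nonadjacent
vertices outside `S` that have a common neighbor in `S` (vertices of `S`
remain as isolated vertices). -/
def SimpleGraph.reduce {V : Type*} (G : SimpleGraph V) (S : Set V) :
    SimpleGraph V where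
  Adj u w := u ∉ S ∧ w ∉ S ∧ u ≠ w ∧
    (G.Adj u w ∨ ∃ s ∈ S, G.Adj u s ∧ G.Adj s w)
  symm := by
    constructor
    rintro u w ⟨hu, hw, hne, h | ⟨s, hs, h1, h2⟩⟩
    · exact ⟨hw, hu, hne.symm, Or.inl h.symm⟩
    · exact ⟨hw, hu, hne.symm, Or.inr ⟨s, hs, h2.symm, h1.symm⟩⟩
  loopless := ⟨fun u h => h.2.2.1 rfl⟩

/-!
A coloring is proper on `G²` exactly when it is proper on `G` and injective on every
neighborhood. Injectivity on `N(v)` makes every color of `N(v)` unique, giving `d(v)` unique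
colors. Conversely, two neighbors `u ≠ w` of `x` with the same color leave at most the
`d(x) - 2 ≤ 1` other neighbors to carry unique colors, whereas `d(x) ≥ 2` demands two.
-/

namespace SimpleGraph

variable {V α : Type*} (G : SimpleGraph V) (φ : V → α)

def uniqueColors (v : V) : Set α :=
  {c | {u | G.Adj v u ∧ φ u = c}.ncard = 1}

theorem isPCFColoring_iff (h : ℕ) :
    G.IsPCFColoring h φ ↔ (∀ ⦃u w : V⦄, G.Adj u w → φ u ≠ φ w) ∧
      ∀ v, min h (G.neighborSet v).ncard ≤ (G.uniqueColors φ v).ncard :=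
  Iff.rfl

variable {G φ}

theorem exists_adj_eq_of_mem_uniqueColors {v : V} {c : α} (hc : c ∈ G.uniqueColors φ v) :
    ∃ u, {u' | G.Adj v u' ∧ φ u' = c} = {u} :=
  Set.ncard_eq_one.mp hc

theorem uniqueColors_eq_image_of_injOn {v : V} (hinj : Set.InjOn φ (G.neighborSet v)) :
    G.uniqueColors φ v = φ '' G.neighborSet v := by
  ext c
  constructor
  · intro hc
    obtain ⟨u, hu⟩ := exists_adj_eq_of_mem_uniqueColors hc
    have hmem : u ∈ {u' | G.Adj v u' ∧ φ u' = c} := hu ▸ rfl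
    exact ⟨u, hmem.1, hmem.2⟩
  · rintro ⟨u, hu, rfl⟩
    have : {u' | G.Adj v u' ∧ φ u' = φ u} = {u} := by
      ext u'
      exact ⟨fun ⟨hu', hc⟩ => hinj hu' hu hc, by rintro rfl; exact ⟨hu, rfl⟩⟩
    simp [uniqueColors, this]

theorem ncard_uniqueColors_of_injOn {v : V} (hinj : Set.InjOn φ (G.neighborSet v)) :
    (G.uniqueColors φ v).ncard = (G.neighborSet v).ncard := by
  rw [uniqueColors_eq_image_of_injOn hinj, hinj.ncard_image]

theorem uniqueColors_subset_image_sdiff {x u w : V} (hne : u ≠ w) (hu : G.Adj x u)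
    (hw : G.Adj x w) (heq : φ u = φ w) :
    G.uniqueColors φ x ⊆ φ '' (G.neighborSet x \ {u, w}) := by
  intro c hc
  obtain ⟨a, ha⟩ := exists_adj_eq_of_mem_uniqueColors hc
  have haa : a ∈ {u' | G.Adj x u' ∧ φ u' = c} := ha ▸ rfl
  have hcolored : ∀ y, G.Adj x y → φ y = c → y = a := fun y hy hyc =>
    Set.mem_singleton_iff.mp (ha ▸ ⟨hy, hyc⟩)
  refine ⟨a, ⟨haa.1, ?_⟩, haa.2⟩
  rintro (rfl | rfl)
  · exact hne (hcolored w hw (heq ▸ haa.2)).symm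
  · exact hne (hcolored u hu (heq ▸ haa.2))

theorem ncard_uniqueColors_add_two_le {x u w : V} (hfin : (G.neighborSet x).Finite)
    (hne : u ≠ w) (hu : G.Adj x u) (hw : G.Adj x w) (heq : φ u = φ w) :
    (G.uniqueColors φ x).ncard + 2 ≤ (G.neighborSet x).ncard := by
  have hpair : ({u, w} : Set V) ⊆ G.neighborSet x := by
    rintro y (rfl | rfl) <;> assumption
  calc (G.uniqueColors φ x).ncard + 2
      ≤ (φ '' (G.neighborSet x \ {u, w})).ncard + ({u, w} : Set V).ncard := by
        rw [Set.ncard_pair hne]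
        exact Nat.add_le_add_right (Set.ncard_le_ncard
          (uniqueColors_subset_image_sdiff hne hu hw heq) (hfin.sdiff.image φ)) 2
    _ ≤ (G.neighborSet x \ {u, w}).ncard + ({u, w} : Set V).ncard :=
        Nat.add_le_add_right (Set.ncard_image_le hfin.sdiff) _
    _ = (G.neighborSet x).ncard := Set.ncard_sdiff_add_ncard_of_subset hpair hfin

end SimpleGraph

open SimpleGraph in
theorem square_coloring_iff_two_pcf_general {V α : Type*} [Fintype V]
    (G : SimpleGraph V) (φ : V → α)
    (hΔ : ∀ v : V, {u | G.Adj v u}.ncard ≤ 3) :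
    (∀ u w : V, u ≠ w → (G.Adj u w ∨ ∃ x : V, G.Adj u x ∧ G.Adj x w) →
      φ u ≠ φ w) ↔ G.IsPCFColoring 2 φ := by
  rw [isPCFColoring_iff]
  constructor
  · intro hsq
    refine ⟨fun u w hadj => hsq u w hadj.ne (Or.inl hadj), fun v => ?_⟩
    have hinj : Set.InjOn φ (G.neighborSet v) := fun a ha b hb hab =>
      by_contra fun hne => hsq a b hne (Or.inr ⟨v, G.adj_symm ha, hb⟩) hab
    rw [ncard_uniqueColors_of_injOn hinj]
    exact min_le_right _ _
  · rintro ⟨hproper, hpcf⟩ u w hne (hadj | ⟨x, hux, hxw⟩) heq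
    · exact hproper hadj heq
    have hfew := ncard_uniqueColors_add_two_le (Set.toFinite _) hne (G.adj_symm hux) hxw heq
    have hmany := hpcf x
    have hdeg := hΔ x
    simp only [neighborSet] at hfew hmany
    omega

theorem square_coloring_iff_two_pcf {V α : Type*} [Fintype V]
    (G : SimpleGraph V) (φ : V → α)
    (hΔ : ∀ v : V, {u | G.Adj v u}.ncard ≤ 3)
    (hproper : ∀ ⦃u w : V⦄, G.Adj u w → φ u ≠ φ w) :
    (∀ u w : V, u ≠ w → (G.Adj u w ∨ ∃ x : V, G.Adj u x ∧ G.Adj x w) →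
      φ u ≠ φ w) ↔ G.IsPCFColoring 2 φ :=
  square_coloring_iff_two_pcf_general G φ hΔ
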